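/- Let Â, B̂ be in SL(2,ℂ) and set A = Φ*(Â), B = Φ*(B̂) and C = (BA)⁻¹ in SL(3,ℂ). Write a = tr(A), b = tr(B), c = tr(C). Then σ₊(A,B,C) = σ₋(A,B,C) and (σ₊(A,B,C) − a − b − c − 1)² = 4(a+1)(b+1)(c+1); equivalently σ₊(A,B,C) is a root of X² − 2(a+b+c+1)X − 4abc + a² + b² + c² − 2ab − 2ac − 2bc − 2a − 2b − 2c − 3. -/

import Mathlib

/-!
`Φ*` is multiplicative and `tr Φ*(M) = (tr M)² - det M`, so all traces in the statement are
polynomials in `x = tr Â`, `y = tr B̂`, `z = tr ÂB̂`: with `M⁻¹ = tr M • 1 - M` on `SL(2)`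
(Cayley–Hamilton), `a = x² - 1`, `b = y² - 1`, `c = z² - 1` and
`σ₊ = σ₋ = (xy - z)² - 1 - (x² - 1)(y² - 1)`. Then `σ₊ - a - b - c - 1 = -2xyz`, whose square is
`4(a + 1)(b + 1)(c + 1)`.
-/

open Matrix

/-- The irreducible representation of `SL(2,ℂ)` on `ℂ³` at the level of matrices. -/
noncomputable def PhiStar (M : Matrix (Fin 2) (Fin 2) ℂ) : Matrix (Fin 3) (Fin 3) ℂ :=
  !![(M 0 0) ^ 2, -(Real.sqrt 2 : ℂ) * M 0 0 * M 0 1, -(M 0 1) ^ 2;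
     -(Real.sqrt 2 : ℂ) * M 0 0 * M 1 0, M 0 0 * M 1 1 + M 0 1 * M 1 0,
       (Real.sqrt 2 : ℂ) * M 0 1 * M 1 1;
     -(M 1 0) ^ 2, (Real.sqrt 2 : ℂ) * M 1 0 * M 1 1, (M 1 1) ^ 2]

namespace Matrix

variable {R : Type*} [CommRing R]

theorem inv_eq_trace_smul_one_sub_of_det_eq_one {M : Matrix (Fin 2) (Fin 2) R}
    (h : M.det = 1) : M⁻¹ = M.trace • 1 - M := by
  rw [inv_def, h, Ring.inverse_one, one_smul, adjugate_fin_two, trace_fin_two]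
  ext i j
  fin_cases i <;> fin_cases j <;> simp

theorem trace_inv_of_det_eq_one {M : Matrix (Fin 2) (Fin 2) R} (h : M.det = 1) :
    M⁻¹.trace = M.trace := by
  rw [inv_eq_trace_smul_one_sub_of_det_eq_one h, trace_sub, trace_smul, trace_one]
  simp only [Fintype.card_fin, smul_eq_mul]
  ring

theorem trace_inv_mul_of_det_eq_one {M : Matrix (Fin 2) (Fin 2) R} (h : M.det = 1)
    (N : Matrix (Fin 2) (Fin 2) R) : (M⁻¹ * N).trace = M.trace * N.trace - (M * N).trace := by
  rw [inv_eq_trace_smul_one_sub_of_det_eq_one h, sub_mul, trace_sub, smul_mul_assoc, one_mul,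
    trace_smul, smul_eq_mul]

end Matrix

theorem phiStar_mul (M N : Matrix (Fin 2) (Fin 2) ℂ) :
    PhiStar M * PhiStar N = PhiStar (M * N) := by
  have hs : (Real.sqrt 2 : ℂ) ^ 2 = 2 := by norm_cast; simp
  ext i j
  fin_cases i <;> fin_cases j <;>
    simp only [PhiStar, mul_apply, of_apply, cons_val', cons_val_fin_one, cons_val_zero,
      cons_val_one, cons_val, Fin.sum_univ_three, Fin.sum_univ_two, Fin.isValue, Fin.zero_eta,
      Fin.mk_one, Fin.reduceFinMk] <;>
    ring_nf <;> simp only [hs] <;> ring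

theorem phiStar_one : PhiStar 1 = 1 := by
  ext i j
  fin_cases i <;> fin_cases j <;> simp [PhiStar, one_apply]

theorem phiStar_inv {M : Matrix (Fin 2) (Fin 2) ℂ} (h : M.det = 1) :
    (PhiStar M)⁻¹ = PhiStar M⁻¹ := by
  refine inv_eq_left_inv ?_
  rw [phiStar_mul, nonsing_inv_mul _ (by simp [h]), phiStar_one]

theorem trace_phiStar (M : Matrix (Fin 2) (Fin 2) ℂ) :
    (PhiStar M).trace = M.trace ^ 2 - M.det := by
  simp only [PhiStar, trace_fin_three, of_apply, cons_val', cons_val_zero, cons_val_fin_one,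
    cons_val_one, cons_val, trace_fin_two, det_fin_two, Fin.isValue]
  ring

theorem trace_inv_phiStar {M : Matrix (Fin 2) (Fin 2) ℂ} (h : M.det = 1) :
    ((PhiStar M)⁻¹).trace = M.trace ^ 2 - 1 := by
  rw [phiStar_inv h, trace_phiStar, trace_inv_of_det_eq_one h, det_nonsing_inv, h,
    Ring.inverse_one]

theorem trace_inv_phiStar_mul_sub {M N : Matrix (Fin 2) (Fin 2) ℂ} (hM : M.det = 1)
    (hN : N.det = 1) :
    ((PhiStar M)⁻¹ * PhiStar N).trace - ((PhiStar M)⁻¹).trace * (PhiStar N).trace =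
      (M.trace * N.trace - (M * N).trace) ^ 2 - 1 - (M.trace ^ 2 - 1) * (N.trace ^ 2 - 1) := by
  rw [trace_inv_phiStar hM, phiStar_inv hM, phiStar_mul, trace_phiStar, trace_phiStar,
    trace_inv_mul_of_det_eq_one hM, det_mul, det_nonsing_inv, hM, hN, Ring.inverse_one, one_mul]

theorem shape_invariant_quadratic_of_irreducible_image
    (Ah Bh : Matrix (Fin 2) (Fin 2) ℂ) (hA : Ah.det = 1) (hB : Bh.det = 1) :
    (let A := PhiStar Ah; let B := PhiStar Bh; let C := (B * A)⁻¹;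
     let a := A.trace; let b := B.trace; let c := C.trace;
     let σp := (A⁻¹ * B).trace - (A⁻¹).trace * B.trace;
     let σm := (B⁻¹ * A).trace - (B⁻¹).trace * A.trace;
     σp = σm ∧
     (σp - a - b - c - 1) ^ 2 = 4 * (a + 1) * (b + 1) * (c + 1) ∧
     σp ^ 2 - 2 * (a + b + c + 1) * σp - 4 * a * b * c + a ^ 2 + b ^ 2 + c ^ 2
       - 2 * a * b - 2 * a * c - 2 * b * c - 2 * a - 2 * b - 2 * c - 3 = 0) := by
  have ha : (PhiStar Ah).trace = Ah.trace ^ 2 - 1 := by rw [trace_phiStar, hA]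
  have hb : (PhiStar Bh).trace = Bh.trace ^ 2 - 1 := by rw [trace_phiStar, hB]
  have hc : ((PhiStar Bh * PhiStar Ah)⁻¹).trace = (Ah * Bh).trace ^ 2 - 1 := by
    rw [phiStar_mul, trace_inv_phiStar (by rw [det_mul, hA, hB, one_mul]), trace_mul_comm]
  have hp := trace_inv_phiStar_mul_sub hA hB
  have hm := trace_inv_phiStar_mul_sub hB hA
  rw [trace_mul_comm Bh Ah] at hm
  intro A B C a b c σp σm
  simp only [σp, σm, a, b, c, A, B, C, hp, hm, ha, hb, hc]
  exact ⟨by ring, by ring, by ring⟩
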